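/- arXiv:1606.09155 — 2 statements merged into one kernel-verified Lean document; each statement's English description precedes it below -/
import Mathlib

section
/- (Global convergence of linearized ALM with constant parameters.) Under the setting of the constant-parameter linearized ALM — β > 0, γ ∈ (0, 2β), P self-adjoint with P − L_f·I positive definite, and for each k ≥ 1 there is a subgradient uᵏ of g at x^{k+1} with ∇f(xᵏ) + uᵏ − A*λᵏ + β A*(A x^{k+1} − b) + P(x^{k+1} − xᵏ) = 0 and λ^{k+1} = λᵏ − γ(A x^{k+1} − b), where g is additionally lower semicontinuous — if some pair satisfies the KKT conditions, then the sequence (xᵏ, λᵏ) converges to a point (x^∞, λ^∞) satisfying the KKT conditions. -/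
/-!
Write `zₖ = (xₖ, λₖ)` and `‖(x, λ)‖²_M = ⟪x, P x⟫ + γ⁻¹‖λ‖²`. For every KKT pair `s`,
`‖zₖ₊₁ - s‖²_M + (2β - γ)‖A xₖ₊₁ - b‖² + ⟪δ, (P - L_f) δ⟫ ≤ ‖zₖ - s‖²_M` with `δ = xₖ₊₁ - xₖ`:
add the monotonicity of the subdifferential of `g` (at `xₖ₊₁` and at `s`), the descent lemma and
convexity of `f`, and the polarization identities for `P` and for the multiplier update.
Since `P - L_f` is positive definite on a finite-dimensional space, the sequence is Fejér monotone
with respect to the KKT set in a norm equivalent to the original one. It is therefore bounded, and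
the residual `A xₖ₊₁ - b` and the steps `δ` tend to `0`. The graph of the subdifferential of a lower
semicontinuous `g` is closed, so every cluster point is a KKT pair, and Fejér monotonicity with
respect to that cluster point makes the whole sequence converge to it.
-/

open Filter Topology Set
open scoped RealInnerProductSpace InnerProduct

section Smooth

variable {E : Type*} [NormedAddCommGroup E] [InnerProductSpace ℝ E] [CompleteSpace E]
  {f : E → ℝ}

theorem ConvexOn.add_inner_le_of_hasGradientAt (hf : ConvexOn ℝ univ f) {a d : E}
    (hd : HasGradientAt f d a) (y : E) : f a + ⟪d, y - a⟫ ≤ f y := by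
  have hφ : HasDerivAt (f ∘ AffineMap.lineMap (k := ℝ) a y) ⟪d, y - a⟫ 0 := by
    simpa using (hasGradientAt_iff_hasFDerivAt.1 (by simpa using hd)).comp_hasDerivAt (0 : ℝ)
      (AffineMap.hasDerivAt_lineMap (a := a) (b := y) (x := 0))
  have := (hf.comp_affineMap (AffineMap.lineMap (k := ℝ) a y)).le_slope_of_hasDerivAt
    (mem_univ 0) (mem_univ 1) one_pos hφ
  simp only [slope_def_field, Function.comp_apply, AffineMap.lineMap_apply_zero,
    AffineMap.lineMap_apply_one, sub_zero, div_one] at this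
  linarith

theorem le_add_inner_add_sq_of_lipschitz_gradient {f' : E → E} {L : ℝ}
    (hgrad : ∀ x, HasGradientAt f (f' x) x) (hlip : ∀ x x', ‖f' x - f' x'‖ ≤ L * ‖x - x'‖)
    (a y : E) : f y ≤ f a + ⟪f' a, y - a⟫ + L / 2 * ‖y - a‖ ^ 2 := by
  set v := y - a
  -- Subtracting the quadratic model before the mean value theorem is what keeps the factor `1 / 2`.
  let ψ : ℝ → ℝ := fun t => f (a + t • v) - t * ⟪f' a, v⟫ - L / 2 * t ^ 2 * ‖v‖ ^ 2
  have hψ : ∀ t, HasDerivAt ψ (⟪f' (a + t • v) - f' a, v⟫ - L * t * ‖v‖ ^ 2) t := fun t => by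
    have hline : HasDerivAt (fun t : ℝ => a + t • v) v t := by
      simpa using ((hasDerivAt_id t).smul_const v).const_add a
    have hf := (hasGradientAt_iff_hasFDerivAt.1 (hgrad (a + t • v))).comp_hasDerivAt t hline
    refine ((hf.sub ((hasDerivAt_id t).mul_const ⟪f' a, v⟫)).sub
      (((hasDerivAt_pow 2 t).const_mul (L / 2)).mul_const (‖v‖ ^ 2))).congr_deriv ?_
    rw [InnerProductSpace.toDual_apply_apply, inner_sub_left]
    ring
  obtain ⟨t, ht, hslope⟩ := exists_hasDerivAt_eq_slope ψ _ one_pos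
    (fun t _ => (hψ t).continuousAt.continuousWithinAt) (fun t _ => hψ t)
  have hderiv_le : ⟪f' (a + t • v) - f' a, v⟫ ≤ L * t * ‖v‖ ^ 2 :=
    calc ⟪f' (a + t • v) - f' a, v⟫ ≤ ‖f' (a + t • v) - f' a‖ * ‖v‖ := real_inner_le_norm _ _
      _ ≤ L * ‖t • v‖ * ‖v‖ := by gcongr; simpa using hlip (a + t • v) a
      _ = L * t * ‖v‖ ^ 2 := by rw [norm_smul, Real.norm_of_nonneg ht.1.le]; ring
  simp only [ψ, v, one_smul, add_sub_cancel, one_mul, one_pow, mul_one, zero_smul, add_zero,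
    zero_mul, sub_zero, ne_eq, OfNat.ofNat_ne_zero, not_false_eq_true, zero_pow, mul_zero,
    div_one] at hslope
  linarith

theorem neg_half_mul_sq_le_inner_gradient_sub {f' : E → E} {L : ℝ} (hf : ConvexOn ℝ univ f)
    (hgrad : ∀ x, HasGradientAt f (f' x) x) (hlip : ∀ x x', ‖f' x - f' x'‖ ≤ L * ‖x - x'‖)
    (a p y : E) : -(L / 2 * ‖y - a‖ ^ 2) ≤ ⟪f' a - f' p, y - p⟫ := by
  have hdesc := le_add_inner_add_sq_of_lipschitz_gradient hgrad hlip a y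
  have hap := hf.add_inner_le_of_hasGradientAt (hgrad a) p
  have hpy := hf.add_inner_le_of_hasGradientAt (hgrad p) y
  have hsplit : ⟪f' a, y - a⟫ = ⟪f' a, y - p⟫ + ⟪f' a, p - a⟫ := by
    rw [← inner_add_right, sub_add_sub_cancel]
  rw [inner_sub_left]
  linarith

end Smooth

section Subgradient

variable {E : Type*} [NormedAddCommGroup E] [InnerProductSpace ℝ E] {g : E → ℝ}

def IsSubgradient (g : E → ℝ) (u x : E) : Prop := ∀ x', g x + ⟪u, x' - x⟫ ≤ g x'

theorem IsSubgradient.inner_sub_nonneg {u v x y : E} (hu : IsSubgradient g u x)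
    (hv : IsSubgradient g v y) : 0 ≤ ⟪u - v, x - y⟫ := by
  have h1 := hu y
  have h2 := hv x
  rw [← neg_sub x y, inner_neg_right] at h1
  rw [inner_sub_left]
  linarith

theorem LowerSemicontinuous.isSubgradient_of_tendsto {ι : Type*} {l : Filter ι} [l.NeBot]
    (hg : LowerSemicontinuous g) {u x : ι → E} {u₀ x₀ : E}
    (hsub : ∀ i, IsSubgradient g (u i) (x i)) (hu : Tendsto u l (𝓝 u₀))
    (hx : Tendsto x l (𝓝 x₀)) : IsSubgradient g u₀ x₀ := by
  intro x'
  have hepi : Tendsto (fun i => (x i, g x' - ⟪u i, x' - x i⟫)) l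
      (𝓝 (x₀, g x' - ⟪u₀, x' - x₀⟫)) :=
    hx.prodMk_nhds (tendsto_const_nhds.sub (hu.inner (tendsto_const_nhds.sub hx)))
  have : g x₀ ≤ g x' - ⟪u₀, x' - x₀⟫ := hg.isClosed_epigraph.mem_of_tendsto hepi
    (Eventually.of_forall fun i => show g (x i) ≤ _ by linarith [hsub i x'])
  linarith

end Subgradient

section Operator

variable {E : Type*} [NormedAddCommGroup E] [InnerProductSpace ℝ E]

theorem exists_pos_mul_sq_le_inner_map_sub [FiniteDimensional ℝ E] (T : E →L[ℝ] E) {L : ℝ}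
    (hT : ∀ v, v ≠ 0 → L * ‖v‖ ^ 2 < ⟪v, T v⟫) :
    ∃ c > 0, ∀ v, c * ‖v‖ ^ 2 ≤ ⟪v, T v⟫ - L * ‖v‖ ^ 2 := by
  rcases subsingleton_or_nontrivial E with hE | hE
  · exact ⟨1, one_pos, fun v => by simp [Subsingleton.elim v 0]⟩
  set q : E → ℝ := fun v => ⟪v, T v⟫ - L * ‖v‖ ^ 2
  obtain ⟨w, hw, hmin⟩ := (isCompact_sphere (0 : E) 1).exists_isMinOn
    (NormedSpace.sphere_nonempty.2 zero_le_one)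
    (by fun_prop : Continuous q).continuousOn
  have hw1 : ‖w‖ = 1 := by simpa using hw
  refine ⟨q w, sub_pos.2 (hT w (by rintro rfl; simp at hw1)), fun v => ?_⟩
  rcases eq_or_ne v 0 with rfl | hv
  · simp
  have hvpos : 0 < ‖v‖ := norm_pos_iff.2 hv
  have : q w ≤ q (‖v‖⁻¹ • v) := hmin (by simp [norm_smul, hvpos.ne'])
  simp only [q, map_smul, real_inner_smul_left, real_inner_smul_right, norm_smul, norm_inv,
    norm_norm] at this
  calc q w * ‖v‖ ^ 2
      ≤ (‖v‖⁻¹ * (‖v‖⁻¹ * ⟪v, T v⟫) - L * (‖v‖⁻¹ * ‖v‖) ^ 2) * ‖v‖ ^ 2 := by gcongr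
    _ = ⟪v, T v⟫ - L * ‖v‖ ^ 2 := by field_simp

theorem IsSelfAdjoint.two_mul_inner_map_sub [CompleteSpace E] {P : E →L[ℝ] E}
    (hP : IsSelfAdjoint P) (v w : E) :
    2 * ⟪P (v - w), v⟫ = ⟪v, P v⟫ - ⟪w, P w⟫ + ⟪v - w, P (v - w)⟫ := by
  have hsymm : ⟪w, P v⟫ = ⟪P w, v⟫ := (hP.isSymmetric w v).symm
  simp only [map_sub, inner_sub_left, inner_sub_right, real_inner_comm v (P v),
    real_inner_comm v (P w)] at hsymm ⊢
  linarith

end Operator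

section Fejer

theorem tendsto_zero_of_mul_sq_norm_le {ι G : Type*} [SeminormedAddCommGroup G] {l : Filter ι}
    {v : ι → G} {a : ι → ℝ} {c : ℝ} (hc : 0 < c) (hv : ∀ i, c * ‖v i‖ ^ 2 ≤ a i)
    (ha : Tendsto a l (𝓝 0)) : Tendsto v l (𝓝 0) := by
  refine squeeze_zero_norm (fun i => ?_) (by simpa using (ha.div_const c).sqrt)
  rw [← Real.sqrt_sq (norm_nonneg (v i))]
  exact Real.sqrt_le_sqrt ((le_div_iff₀ hc).2 (by linarith [hv i]))

theorem tendsto_zero_of_add_le {V r : ℕ → ℝ} (hV : ∀ n, 0 ≤ V n) (hr : ∀ n, 0 ≤ r n)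
    (h : ∀ n, V (n + 1) + r n ≤ V n) : Tendsto r atTop (𝓝 0) := by
  have hanti : Antitone V := antitone_nat_of_succ_le fun n => by linarith [h n, hr n]
  have hV' := tendsto_atTop_ciInf hanti ⟨0, forall_mem_range.2 hV⟩
  have hdiff : Tendsto (fun n => V n - V (n + 1)) atTop (𝓝 0) := by
    simpa using hV'.sub (hV'.comp (tendsto_add_atTop_nat 1))
  exact squeeze_zero hr (fun n => by linarith [h n]) hdiff

theorem exists_tendsto_of_fejer_monotone {X : Type*} [NormedAddCommGroup X] [ProperSpace X]
    {Q : X → ℝ} {c : ℝ} (hc : 0 < c) (hQ : ∀ v, c * ‖v‖ ^ 2 ≤ Q v)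
    (hQ0 : Tendsto Q (𝓝 0) (𝓝 0)) {S : Set X} {s₀ : X} (hs₀ : s₀ ∈ S) {z : ℕ → X}
    (hanti : ∀ s ∈ S, Antitone fun n => Q (z n - s))
    (hcluster : ∀ s (φ : ℕ → ℕ), StrictMono φ → Tendsto (z ∘ φ) atTop (𝓝 s) → s ∈ S) :
    ∃ s ∈ S, Tendsto z atTop (𝓝 s) := by
  have hbdd : ∀ n, z n ∈ Metric.closedBall s₀ √(Q (z 0 - s₀) / c) := fun n => by
    rw [Metric.mem_closedBall, dist_eq_norm, ← Real.sqrt_sq (norm_nonneg _)]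
    exact Real.sqrt_le_sqrt
      ((le_div_iff₀ hc).2 (by linarith [hQ (z n - s₀), hanti s₀ hs₀ n.zero_le]))
  obtain ⟨s, -, φ, hφ, hzφ⟩ := tendsto_subseq_of_bounded Metric.isBounded_closedBall hbdd
  have hs := hcluster s φ hφ hzφ
  have hQφ : Tendsto (fun n => Q (z (φ n) - s)) atTop (𝓝 0) :=
    hQ0.comp (by simpa using hzφ.sub_const s)
  have hQz := (tendsto_iff_tendsto_subseq_of_antitone (hanti s hs) hφ.tendsto_atTop).2 hQφ
  exact ⟨s, hs, by
    simpa using (tendsto_zero_of_mul_sq_norm_le hc (fun n => hQ (z n - s)) hQz).add_const s⟩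

end Fejer

section PrimalDualNorm

variable {E H : Type*} [NormedAddCommGroup E] [InnerProductSpace ℝ E] [NormedAddCommGroup H]

noncomputable def primalDualNormSq (P : E →L[ℝ] E) (γ : ℝ) (z : E × H) : ℝ :=
  ⟪z.1, P z.1⟫ + γ⁻¹ * ‖z.2‖ ^ 2

theorem mul_sq_norm_le_primalDualNormSq {P : E →L[ℝ] E} {c γ : ℝ} (hc : 0 < c) (hγ : 0 < γ)
    (hP : ∀ v, c * ‖v‖ ^ 2 ≤ ⟪v, P v⟫) (z : E × H) :
    min c γ⁻¹ * ‖z‖ ^ 2 ≤ primalDualNormSq P γ z := by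
  have hmax : ‖z‖ ^ 2 ≤ ‖z.1‖ ^ 2 + ‖z.2‖ ^ 2 := by
    rw [Prod.norm_def]
    rcases max_cases ‖z.1‖ ‖z.2‖ with ⟨h, -⟩ | ⟨h, -⟩ <;> rw [h] <;>
      nlinarith [sq_nonneg ‖z.1‖, sq_nonneg ‖z.2‖]
  have hc' : 0 ≤ min c γ⁻¹ := le_min hc.le (inv_nonneg.2 hγ.le)
  calc min c γ⁻¹ * ‖z‖ ^ 2 ≤ min c γ⁻¹ * ‖z.1‖ ^ 2 + min c γ⁻¹ * ‖z.2‖ ^ 2 := by nlinarith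
    _ ≤ c * ‖z.1‖ ^ 2 + γ⁻¹ * ‖z.2‖ ^ 2 := by gcongr; exacts [min_le_left _ _, min_le_right _ _]
    _ ≤ primalDualNormSq P γ z := by unfold primalDualNormSq; linarith [hP z.1]

theorem continuous_primalDualNormSq (P : E →L[ℝ] E) (γ : ℝ) :
    Continuous (primalDualNormSq (H := H) P γ) := by
  unfold primalDualNormSq
  fun_prop

end PrimalDualNorm

section LinearizedALM

variable {E H : Type*} [NormedAddCommGroup E] [InnerProductSpace ℝ E] [CompleteSpace E]
  [NormedAddCommGroup H] [InnerProductSpace ℝ H] [CompleteSpace H]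

def IsKKTPoint (A : E →L[ℝ] H) (b : H) (f' : E → E) (g : E → ℝ) (z : E × H) : Prop :=
  A z.1 = b ∧ IsSubgradient g ((A†) z.2 - f' z.1) z.1

variable {A : E →L[ℝ] H} {b : H} {f' : E → E} {g : E → ℝ} {β : ℝ} {P : E →L[ℝ] E}

theorem primalDualNormSq_step_le {f : E → ℝ} {L γ : ℝ} (hf : ConvexOn ℝ univ f)
    (hgrad : ∀ x, HasGradientAt f (f' x) x) (hlip : ∀ x x', ‖f' x - f' x'‖ ≤ L * ‖x - x'‖)
    (hP : IsSelfAdjoint P) (hγ : 0 < γ) {xk xk1 u : E} {lk lk1 : H}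
    (hu : IsSubgradient g u xk1)
    (hupd : f' xk + u - (A†) lk + β • (A†) (A xk1 - b) + P (xk1 - xk) = 0)
    (hlam : lk1 = lk - γ • (A xk1 - b)) {z : E × H} (hz : IsKKTPoint A b f' g z) :
    primalDualNormSq P γ ((xk1, lk1) - z) + (2 * β - γ) * ‖A xk1 - b‖ ^ 2
      + (⟪xk1 - xk, P (xk1 - xk)⟫ - L * ‖xk1 - xk‖ ^ 2)
      ≤ primalDualNormSq P γ ((xk, lk) - z) := by
  obtain rfl : u = (A†) lk - β • (A†) (A xk1 - b) - P (xk1 - xk) - f' xk := by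
    linear_combination (norm := module) hupd
  obtain ⟨p, q⟩ := z
  obtain ⟨hfeas, hsub⟩ := hz
  simp only [primalDualNormSq, Prod.fst_sub, Prod.snd_sub]
  set r := A xk1 - b
  have hAr : A (xk1 - p) = r := by rw [map_sub, hfeas]
  have hmono := hu.inner_sub_nonneg hsub
  have hexpand : ⟪(A†) lk - β • (A†) r - P (xk1 - xk) - f' xk - ((A†) q - f' p), xk1 - p⟫
      = ⟪lk - q, r⟫ - β * ‖r‖ ^ 2 - ⟪P (xk1 - xk), xk1 - p⟫ - ⟪f' xk - f' p, xk1 - p⟫ := by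
    simp only [inner_sub_left, real_inner_smul_left, ContinuousLinearMap.adjoint_inner_left, hAr,
      real_inner_self_eq_norm_sq]
    ring
  have hsmooth := neg_half_mul_sq_le_inner_gradient_sub hf hgrad hlip xk p xk1
  have hPid := hP.two_mul_inner_map_sub (xk1 - p) (xk - p)
  rw [sub_sub_sub_cancel_right] at hPid
  have hdual : γ⁻¹ * ‖lk1 - q‖ ^ 2 = γ⁻¹ * ‖lk - q‖ ^ 2 - 2 * ⟪lk - q, r⟫ + γ * ‖r‖ ^ 2 := by
    rw [hlam, sub_right_comm, norm_sub_sq_real, real_inner_smul_right, norm_smul,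
      Real.norm_of_nonneg hγ.le]
    field_simp
  linarith

theorem isKKTPoint_of_tendsto {ι : Type*} {l : Filter ι} [l.NeBot] (hf' : Continuous f')
    (hg : LowerSemicontinuous g) {xk xk1 u : ι → E} {lk : ι → H} {x₀ : E} {l₀ : H}
    (hu : ∀ i, IsSubgradient g (u i) (xk1 i))
    (hupd : ∀ i, f' (xk i) + u i - (A†) (lk i) + β • (A†) (A (xk1 i) - b) + P (xk1 i - xk i) = 0)
    (hx : Tendsto xk l (𝓝 x₀)) (hl : Tendsto lk l (𝓝 l₀))
    (hr : Tendsto (fun i => A (xk1 i) - b) l (𝓝 0))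
    (hs : Tendsto (fun i => xk1 i - xk i) l (𝓝 0)) : IsKKTPoint A b f' g (x₀, l₀) := by
  have hx1 : Tendsto xk1 l (𝓝 x₀) := by simpa using hs.add hx
  have hfeas : A x₀ = b := sub_eq_zero.1 <|
    tendsto_nhds_unique (((A.continuous.tendsto x₀).comp hx1).sub_const b) hr
  obtain rfl : u = fun i => (A†) (lk i) - β • (A†) (A (xk1 i) - b) - P (xk1 i - xk i)
      - f' (xk i) := funext fun i => by linear_combination (norm := module) hupd i
  refine ⟨hfeas, hg.isSubgradient_of_tendsto hu ?_ hx1⟩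
  simpa using (((((A†).continuous.tendsto l₀).comp hl).sub
    ((((A†).continuous.tendsto 0).comp hr).const_smul β)).sub
    ((P.continuous.tendsto 0).comp hs)).sub ((hf'.tendsto x₀).comp hx)

end LinearizedALM

theorem stmt_7_general {E H : Type*}
    [NormedAddCommGroup E] [InnerProductSpace ℝ E] [FiniteDimensional ℝ E]
    [NormedAddCommGroup H] [InnerProductSpace ℝ H] [FiniteDimensional ℝ H]
    (A : E →L[ℝ] H) (b : H)
    (f : E → ℝ) (f' : E → E) (Lf : ℝ) (hLf : 0 ≤ Lf)
    (hfconv : ConvexOn ℝ Set.univ f)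
    (hgrad : ∀ x : E, HasGradientAt f (f' x) x)
    (hlip : ∀ x x' : E, ‖f' x - f' x'‖ ≤ Lf * ‖x - x'‖)
    (g : E → ℝ) (hglsc : LowerSemicontinuous g)
    (β γ : ℝ) (hγ0 : 0 < γ) (hγ2 : γ < 2 * β)
    (P : E →L[ℝ] E) (hP : IsSelfAdjoint P)
    (hPpd : ∀ v : E, v ≠ 0 → Lf * ‖v‖ ^ 2 < ⟪v, P v⟫)
    (x : ℕ → E) (lam : ℕ → H)
    (hopt : ∀ k : ℕ, 1 ≤ k → ∃ u : E,
      (∀ x' : E, g x' ≥ g (x (k+1)) + ⟪u, x' - x (k+1)⟫) ∧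
      f' (x k) + u - (ContinuousLinearMap.adjoint A) (lam k)
        + β • (ContinuousLinearMap.adjoint A) (A (x (k+1)) - b)
        + P (x (k+1) - x k) = 0)
    (hlam : ∀ k : ℕ, 1 ≤ k → lam (k+1) = lam k - γ • (A (x (k+1)) - b))
    (xs : E) (ls : H)
    (hfeas : A xs = b)
    (hkkt : ∀ x' : E, g x' ≥ g xs + ⟪(ContinuousLinearMap.adjoint A) ls - f' xs, x' - xs⟫) :
    ∃ (xi : E) (li : H),
      A xi = b ∧
      (∀ x' : E, g x' ≥ g xi + ⟪(ContinuousLinearMap.adjoint A) li - f' xi, x' - xi⟫) ∧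
      Filter.Tendsto (fun k : ℕ => (x k, lam k)) Filter.atTop (nhds (xi, li)) := by
  choose! u hu hupd using hopt
  have hf'_cont : Continuous f' :=
    (LipschitzWith.of_dist_le' fun x y => by simpa [dist_eq_norm] using hlip x y).continuous
  obtain ⟨c, hc, hPc⟩ := exists_pos_mul_sq_le_inner_map_sub P hPpd
  set Q := primalDualNormSq (H := H) P γ
  set z : ℕ → E × H := fun n => (x (n + 1), lam (n + 1))
  set R : ℕ → ℝ := fun n =>
    (2 * β - γ) * ‖A (x (n + 2)) - b‖ ^ 2 + c * ‖x (n + 2) - x (n + 1)‖ ^ 2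
  have hQ : ∀ v, min c γ⁻¹ * ‖v‖ ^ 2 ≤ Q v :=
    mul_sq_norm_le_primalDualNormSq hc hγ0 fun v => by nlinarith [hPc v, sq_nonneg ‖v‖]
  have hγβ : 0 < 2 * β - γ := sub_pos.2 hγ2
  have hR : ∀ n, 0 ≤ R n := fun n => by positivity
  have hdecr : ∀ s, IsKKTPoint A b f' g s → ∀ n, Q (z (n + 1) - s) + R n ≤ Q (z n - s) :=
    fun s hs n => by
      linarith [hPc (x (n + 2) - x (n + 1)), primalDualNormSq_step_le hfconv hgrad hlip hP hγ0
        (hu _ n.succ_pos) (hupd _ n.succ_pos) (hlam _ n.succ_pos) hs]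
  have hres := tendsto_zero_of_add_le (V := fun n => Q (z n - (xs, ls)))
    (fun n => (by positivity : 0 ≤ min c γ⁻¹ * _).trans (hQ _)) hR (hdecr _ ⟨hfeas, hkkt⟩)
  have hr : Tendsto (fun n => A (x (n + 2)) - b) atTop (𝓝 0) :=
    tendsto_zero_of_mul_sq_norm_le hγβ (fun n => le_add_of_nonneg_right (by positivity)) hres
  have hs : Tendsto (fun n => x (n + 2) - x (n + 1)) atTop (𝓝 0) :=
    tendsto_zero_of_mul_sq_norm_le hc (fun n => le_add_of_nonneg_left (by positivity)) hres
  obtain ⟨⟨xi, li⟩, hkkt_lim, hz⟩ := exists_tendsto_of_fejer_monotone (z := z)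
    (lt_min hc (inv_pos.2 hγ0)) hQ
    ((continuous_primalDualNormSq P γ).tendsto' 0 0 (by simp [primalDualNormSq]))
    (show (xs, ls) ∈ {s | IsKKTPoint A b f' g s} from ⟨hfeas, hkkt⟩)
    (fun s hs => antitone_nat_of_succ_le fun n => by linarith [hdecr s hs n, hR n])
    fun ⟨x₀, l₀⟩ φ hφ hzφ => isKKTPoint_of_tendsto (β := β) hf'_cont hglsc
      (xk := fun j => x (φ j + 1)) (lk := fun j => lam (φ j + 1))
      (fun j => hu _ (φ j).succ_pos) (fun j => hupd _ (φ j).succ_pos)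
      ((continuous_fst.tendsto _).comp hzφ) ((continuous_snd.tendsto _).comp hzφ)
      (hr.comp hφ.tendsto_atTop) (hs.comp hφ.tendsto_atTop)
  exact ⟨xi, li, hkkt_lim.1, hkkt_lim.2, (tendsto_add_atTop_iff_nat 1).1 hz⟩

/-- Global convergence of the linearized ALM with constant parameters: the
iterates `(xᵏ, λᵏ)` converge to a pair `(x^∞, λ^∞)` satisfying the KKT conditions. -/
theorem stmt_7 {E H : Type*}
    [NormedAddCommGroup E] [InnerProductSpace ℝ E] [FiniteDimensional ℝ E]
    [NormedAddCommGroup H] [InnerProductSpace ℝ H] [FiniteDimensional ℝ H]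
    (A : E →L[ℝ] H) (b : H)
    (f : E → ℝ) (f' : E → E) (Lf : ℝ) (hLf : 0 ≤ Lf)
    (hfconv : ConvexOn ℝ Set.univ f)
    (hgrad : ∀ x : E, HasGradientAt f (f' x) x)
    (hlip : ∀ x x' : E, ‖f' x - f' x'‖ ≤ Lf * ‖x - x'‖)
    (g : E → ℝ) (hgconv : ConvexOn ℝ Set.univ g) (hglsc : LowerSemicontinuous g)
    (β γ : ℝ) (hβ : 0 < β) (hγ0 : 0 < γ) (hγ2 : γ < 2 * β)
    (P : E →L[ℝ] E) (hP : IsSelfAdjoint P)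
    (hPpd : ∀ v : E, v ≠ 0 → Lf * ‖v‖ ^ 2 < ⟪v, P v⟫)
    (x : ℕ → E) (lam : ℕ → H)
    (hopt : ∀ k : ℕ, 1 ≤ k → ∃ u : E,
      (∀ x' : E, g x' ≥ g (x (k+1)) + ⟪u, x' - x (k+1)⟫) ∧
      f' (x k) + u - (ContinuousLinearMap.adjoint A) (lam k)
        + β • (ContinuousLinearMap.adjoint A) (A (x (k+1)) - b)
        + P (x (k+1) - x k) = 0)
    (hlam : ∀ k : ℕ, 1 ≤ k → lam (k+1) = lam k - γ • (A (x (k+1)) - b))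
    (xs : E) (ls : H)
    (hfeas : A xs = b)
    (hkkt : ∀ x' : E, g x' ≥ g xs + ⟪(ContinuousLinearMap.adjoint A) ls - f' xs, x' - xs⟫) :
    ∃ (xi : E) (li : H),
      A xi = b ∧
      (∀ x' : E, g x' ≥ g xi + ⟪(ContinuousLinearMap.adjoint A) li - f' xi, x' - xi⟫) ∧
      Filter.Tendsto (fun k : ℕ => (x k, lam k)) Filter.atTop (nhds (xi, li)) :=
  stmt_7_general A b f f' Lf hLf hfconv hgrad hlip g hglsc β γ hγ0 hγ2 P hP hPpd x lam hopt hlam xs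
    ls hfeas hkkt
end

section
/- (O(1/t) ergodic rate of linearized ADMM with constant parameters.) Let γ > 0, let P be self-adjoint positive semidefinite on Y, and let Q be self-adjoint on Z with Q − L_h·I positive semidefinite. Let (yᵏ, zᵏ, λᵏ)_{k≥1} satisfy λ¹ = 0 and, for each k ≥ 1: there is a subgradient u of f at y^{k+1} with u − B*λᵏ + γ B*(B y^{k+1} + C zᵏ − b) + P(y^{k+1} − yᵏ) = 0; there is a subgradient v of g at z^{k+1} with v + ∇h(zᵏ) − C*λᵏ + γ C*(B y^{k+1} + C z^{k+1} − b) + Q(z^{k+1} − zᵏ) = 0; and λ^{k+1} = λᵏ − γ(B y^{k+1} + C z^{k+1} − b). Let (y*, z*, λ*) satisfy the KKT conditions with λ* ≠ 0, and set ỹ^{t+1} = (1/t)∑_{k=1}^t y^{k+1}, z̃^{t+1} = (1/t)∑_{k=1}^t z^{k+1}. Then |F(ỹ^{t+1}, z̃^{t+1}) − F(y*, z*)| ≤ (1/(2t))·(4‖λ*‖²/γ + ‖y¹ − y*‖²_P + ‖z¹ − z*‖²_{Q + γ C*C}) and ‖B ỹ^{t+1} + C z̃^{t+1} − b‖ ≤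 (1/(2t‖λ*‖))·(4‖λ*‖²/γ + ‖y¹ − y*‖²_P + ‖z¹ − z*‖²_{Q + γ C*C}). -/
/-!
Along the iterates, the energy
`E_k(μ) = ½ (‖λᵏ + μ‖² / γ + ‖yᵏ - y*‖²_P + ‖zᵏ - z*‖²_{Q + γ C*C})`
decreases at step `k` by at least the Lagrangian gap
`F(y^{k+1}, z^{k+1}) - F(y*, z*) + ⟪μ, B y^{k+1} + C z^{k+1} - b⟫`: this follows from the two
subgradient conditions, the descent lemma for `h`, and three-point identities, with Young's
inequality absorbing the cross term and `Q ≥ L_h` absorbing the linearization error of `h`.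
The gap is convex in `(y, z)`, so by Jensen and telescoping `t · gap(ỹ, z̃; μ) ≤ E_1(μ)` for
every `μ`. Taking `μ = 0` bounds the objective gap from above; the KKT conditions give the
saddle-point bound `gap ≥ ⟪λ*, r⟫ ≥ -‖λ*‖ ‖r‖`, and `μ` of norm `2‖λ*‖` aligned with the
averaged residual `r` then bounds `‖r‖` and the gap from below.
-/

open scoped RealInnerProductSpace
open Finset

section Gradient

variable {E : Type*} [NormedAddCommGroup E] [InnerProductSpace ℝ E] [CompleteSpace E]
  {φ : E → ℝ}

theorem HasGradientAt.hasDerivAt_comp_add_smul {φ' x d : E} {s : ℝ}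
    (hφ : HasGradientAt φ φ' (x + s • d)) :
    HasDerivAt (fun s : ℝ => φ (x + s • d)) ⟪φ', d⟫ s := by
  have hline : HasDerivAt (fun s : ℝ => x + s • d) d s := by
    simpa using ((hasDerivAt_id s).smul_const d).const_add x
  have hcomp := hφ.hasFDerivAt.comp_hasDerivAt s hline
  rwa [InnerProductSpace.toDual_apply_apply] at hcomp

theorem ConvexOn.add_inner_le_of_hasGradientAt_s11 (hφ : ConvexOn ℝ Set.univ φ) {φ' x : E}
    (hgrad : HasGradientAt φ φ' x) (w : E) :
    φ x + ⟪φ', w - x⟫ ≤ φ w := by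
  have hline : ConvexOn ℝ Set.univ (fun s : ℝ => φ (x + s • (w - x))) := by
    simpa [Function.comp_def] using
      (hφ.translate_right x).comp_linearMap (LinearMap.toSpanSingleton ℝ E (w - x))
  have hderiv : HasDerivAt (fun s : ℝ => φ (x + s • (w - x))) ⟪φ', w - x⟫ 0 :=
    HasGradientAt.hasDerivAt_comp_add_smul (by simpa using hgrad)
  have hslope := hline.le_slope_of_hasDerivAt (Set.mem_univ 0) (Set.mem_univ 1) one_pos hderiv
  simp only [slope_def_field, one_smul, add_sub_cancel, zero_smul, add_zero, sub_zero,
    div_one] at hslope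
  linarith

theorem le_add_inner_add_of_lipschitz_gradient {φ' : E → E} {L : ℝ}
    (hgrad : ∀ x, HasGradientAt φ (φ' x) x) (hlip : ∀ x x', ‖φ' x - φ' x'‖ ≤ L * ‖x - x'‖)
    (x w : E) :
    φ w ≤ φ x + ⟪φ' x, w - x⟫ + L / 2 * ‖w - x‖ ^ 2 := by
  set d := w - x
  -- `φ` minus its quadratic upper model is nonincreasing along the segment
  let ψ : ℝ → ℝ := fun s => φ (x + s • d) - s * ⟪φ' x, d⟫ - L / 2 * s ^ 2 * ‖d‖ ^ 2
  have hψ : ∀ s, HasDerivAt ψ (⟪φ' (x + s • d) - φ' x, d⟫ - L * s * ‖d‖ ^ 2) s := by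
    intro s
    have hφ := (hgrad (x + s • d)).hasDerivAt_comp_add_smul (x := x) (d := d)
    have hlin := (hasDerivAt_id s).mul_const ⟪φ' x, d⟫
    have hquad := ((hasDerivAt_pow 2 s).const_mul (L / 2)).mul_const (‖d‖ ^ 2)
    refine ((hφ.sub hlin).sub hquad).congr_deriv ?_
    rw [inner_sub_left]
    push_cast
    ring
  have hanti : AntitoneOn ψ (Set.Ici 0) := by
    refine antitoneOn_of_hasDerivWithinAt_nonpos (convex_Ici 0)
      (fun s _ => (hψ s).continuousAt.continuousWithinAt)
      (fun s _ => (hψ s).hasDerivWithinAt) ?_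
    intro s hs
    rw [interior_Ici, Set.mem_Ioi] at hs
    have hstep : ‖φ' (x + s • d) - φ' x‖ ≤ L * (s * ‖d‖) := by
      simpa [norm_smul, abs_of_pos hs] using hlip (x + s • d) x
    calc ⟪φ' (x + s • d) - φ' x, d⟫ - L * s * ‖d‖ ^ 2
        ≤ ‖φ' (x + s • d) - φ' x‖ * ‖d‖ - L * s * ‖d‖ ^ 2 := by
          gcongr; exact real_inner_le_norm _ _
      _ ≤ L * (s * ‖d‖) * ‖d‖ - L * s * ‖d‖ ^ 2 := by gcongr
      _ = 0 := by ring
  have hψ10 : ψ 1 ≤ ψ 0 := hanti Set.self_mem_Ici (Set.mem_Ici.mpr zero_le_one) zero_le_one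
  simp only [ψ, d, one_smul, add_sub_cancel, zero_smul, add_zero] at hψ10
  linarith

theorem ConvexOn.sub_le_inner_add_of_lipschitz_gradient (hφ : ConvexOn ℝ Set.univ φ) {φ' : E → E}
    {L : ℝ} (hgrad : ∀ x, HasGradientAt φ (φ' x) x)
    (hlip : ∀ x x', ‖φ' x - φ' x'‖ ≤ L * ‖x - x'‖) (x w z : E) :
    φ w - φ z ≤ ⟪φ' x, w - z⟫ + L / 2 * ‖w - x‖ ^ 2 := by
  have hupper := le_add_inner_add_of_lipschitz_gradient hgrad hlip x w
  have hlower := hφ.add_inner_le_of_hasGradientAt_s11 (hgrad x) z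
  have hsplit : ⟪φ' x, w - z⟫ = ⟪φ' x, w - x⟫ - ⟪φ' x, z - x⟫ := by
    rw [← inner_sub_right, sub_sub_sub_cancel_right]
  linarith

end Gradient

theorem LinearMap.IsSymmetric.two_mul_inner_sub_sub {E : Type*} [NormedAddCommGroup E]
    [InnerProductSpace ℝ E] {M : E →ₗ[ℝ] E} (hM : M.IsSymmetric) (u v w : E) :
    2 * ⟪M (u - v), u - w⟫ = ⟪u - w, M (u - w)⟫ + ⟪u - v, M (u - v)⟫ - ⟪v - w, M (v - w)⟫ := by
  rw [show v - w = (u - w) - (u - v) by abel]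
  generalize u - w = a
  generalize u - v = c
  have h₁ : ⟪M c, a⟫ = ⟪c, M a⟫ := hM c a
  have h₂ : ⟪a, M c⟫ = ⟪c, M a⟫ := by rw [← h₁, real_inner_comm]
  simp only [map_sub, inner_sub_left, inner_sub_right]
  linarith

theorem ConvexOn.mul_map_average_le {E : Type*} [AddCommGroup E] [Module ℝ E] {φ : E → ℝ}
    (hφ : ConvexOn ℝ Set.univ φ) {x : ℕ → E} {V : ℕ → ℝ} {t : ℕ} (ht : 1 ≤ t)
    (hV : 0 ≤ V (t + 1)) (hstep : ∀ k ∈ Icc 1 t, φ (x k) ≤ V k - V (k + 1)) :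
    t * φ ((t : ℝ)⁻¹ • ∑ k ∈ Icc 1 t, x k) ≤ V 1 := by
  have htpos : (0 : ℝ) < t := by exact_mod_cast ht
  have hcard : #(Icc 1 t) = t := by simp
  have hjensen : φ (∑ k ∈ Icc 1 t, (t : ℝ)⁻¹ • x k) ≤ ∑ k ∈ Icc 1 t, (t : ℝ)⁻¹ • φ (x k) :=
    hφ.map_sum_le (fun _ _ => by positivity) (by simp [hcard, htpos.ne'])
      (fun _ _ => Set.mem_univ _)
  have htelescope : ∑ k ∈ Icc 1 t, (V k - V (k + 1)) = V 1 - V (t + 1) := by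
    rw [← neg_sub, ← Finset.sum_Icc_sub ht, ← Finset.sum_neg_distrib]
    simp
  rw [← Finset.smul_sum, ← Finset.smul_sum, smul_eq_mul] at hjensen
  calc t * φ ((t : ℝ)⁻¹ • ∑ k ∈ Icc 1 t, x k)
      ≤ t * ((t : ℝ)⁻¹ * ∑ k ∈ Icc 1 t, φ (x k)) := by gcongr
    _ = ∑ k ∈ Icc 1 t, φ (x k) := by field_simp
    _ ≤ ∑ k ∈ Icc 1 t, (V k - V (k + 1)) := Finset.sum_le_sum hstep
    _ ≤ V 1 := by linarith

section LinearizedADMM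

variable {Y Z H : Type*}
  [NormedAddCommGroup Y] [InnerProductSpace ℝ Y]
  [NormedAddCommGroup Z] [InnerProductSpace ℝ Z]
  [NormedAddCommGroup H] [InnerProductSpace ℝ H]
  (B : Y →L[ℝ] H) (C : Z →L[ℝ] H) (b : H) (f : Y → ℝ) (g h : Z → ℝ) (ys : Y) (zs : Z)

noncomputable def lagrangianGap (μ : H) (p : Y × Z) : ℝ :=
  f p.1 + g p.2 + h p.2 - (f ys + g zs + h zs) + ⟪μ, B p.1 + C p.2 - b⟫

noncomputable def ladmmEnergy (γ : ℝ) (P : Y →L[ℝ] Y) (Q : Z →L[ℝ] Z) (y : Y) (z : Z) (l : H) :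
    ℝ :=
  (‖l‖ ^ 2 / γ + ⟪y - ys, P (y - ys)⟫ + (⟪z - zs, Q (z - zs)⟫ + γ * ‖C (z - zs)‖ ^ 2)) / 2

def IsLinearizedADMMStep [CompleteSpace Y] [CompleteSpace Z] [CompleteSpace H]
    (h' : Z → Z) (γ : ℝ) (P : Y →L[ℝ] Y) (Q : Z →L[ℝ] Z)
    (y₀ : Y) (z₀ : Z) (l₀ : H) (y₁ : Y) (z₁ : Z) (l₁ : H) : Prop :=
  (∃ u : Y, (∀ y' : Y, f y' ≥ f y₁ + ⟪u, y' - y₁⟫) ∧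
    u - B.adjoint l₀ + γ • B.adjoint (B y₁ + C z₀ - b) + P (y₁ - y₀) = 0) ∧
  (∃ v : Z, (∀ z' : Z, g z' ≥ g z₁ + ⟪v, z' - z₁⟫) ∧
    v + h' z₀ - C.adjoint l₀ + γ • C.adjoint (B y₁ + C z₁ - b) + Q (z₁ - z₀) = 0) ∧
  l₁ = l₀ - γ • (B y₁ + C z₁ - b)

variable {B C b f g h ys zs}

theorem convexOn_lagrangianGap (hf : ConvexOn ℝ Set.univ f) (hg : ConvexOn ℝ Set.univ g)
    (hh : ConvexOn ℝ Set.univ h) (μ : H) :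
    ConvexOn ℝ Set.univ (lagrangianGap B C b f g h ys zs μ) := by
  have hlin : ConvexOn ℝ Set.univ fun p : Y × Z => ⟪μ, B p.1 + C p.2⟫ :=
    ((innerₛₗ ℝ μ).comp (B.coprod C : Y × Z →ₗ[ℝ] H)).convexOn convex_univ
  refine ((((hf.comp_linearMap (LinearMap.fst ℝ Y Z)).add
    ((hg.add hh).comp_linearMap (LinearMap.snd ℝ Y Z))).add hlin).add_const
    (-(f ys + g zs + h zs) - ⟪μ, b⟫)).congr fun p _ => ?_
  change f p.1 + (g p.2 + h p.2) + ⟪μ, B p.1 + C p.2⟫ + _ = _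
  rw [lagrangianGap, inner_sub_right]
  ring

theorem lagrangianGap_le_of_isLinearizedADMMStep [CompleteSpace Y] [CompleteSpace Z]
    [CompleteSpace H] {h' : Z → Z} {L γ : ℝ} {P : Y →L[ℝ] Y} {Q : Z →L[ℝ] Z}
    (hh : ConvexOn ℝ Set.univ h) (hgrad : ∀ z, HasGradientAt h (h' z) z)
    (hlip : ∀ z z', ‖h' z - h' z'‖ ≤ L * ‖z - z'‖) (hfeas : B ys + C zs = b)
    {y₀ y₁ : Y} {z₀ z₁ : Z} {l₀ l₁ : H}
    (hstep : IsLinearizedADMMStep B C b f g h' γ P Q y₀ z₀ l₀ y₁ z₁ l₁) (μ : H) :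
    lagrangianGap B C b f g h ys zs μ (y₁, z₁) ≤
      ⟪l₁ + μ, B y₁ + C z₁ - b⟫ + γ * ⟪C (z₁ - z₀), B (y₁ - ys)⟫
        - ⟪P (y₁ - y₀), y₁ - ys⟫ - ⟪Q (z₁ - z₀), z₁ - zs⟫ + L / 2 * ‖z₁ - z₀‖ ^ 2 := by
  obtain ⟨⟨u, hu, hu_eq⟩, ⟨v, hv, hv_eq⟩, hl₁⟩ := hstep
  have hu' : u = B.adjoint (l₁ + γ • C (z₁ - z₀)) - P (y₁ - y₀) := by
    rw [hl₁]
    simp only [map_sub, map_add, map_smul] at hu_eq ⊢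
    linear_combination (norm := module) hu_eq
  have hv' : v + h' z₀ = C.adjoint l₁ - Q (z₁ - z₀) := by
    rw [hl₁]
    simp only [map_sub, map_add, map_smul] at hv_eq ⊢
    linear_combination (norm := module) hv_eq
  have hfy : f y₁ - f ys ≤ ⟪u, y₁ - ys⟫ := by
    have := hu ys
    rw [← neg_sub, inner_neg_right] at this
    linarith
  have hgz : g z₁ - g zs ≤ ⟪v, z₁ - zs⟫ := by
    have := hv zs
    rw [← neg_sub, inner_neg_right] at this
    linarith
  have hhz := hh.sub_le_inner_add_of_lipschitz_gradient hgrad hlip z₀ z₁ zs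
  have hres : B (y₁ - ys) + C (z₁ - zs) = B y₁ + C z₁ - b := by
    rw [map_sub, map_sub, ← hfeas]
    abel
  have hyinner : ⟪u, y₁ - ys⟫ = ⟪l₁, B (y₁ - ys)⟫ + γ * ⟪C (z₁ - z₀), B (y₁ - ys)⟫
      - ⟪P (y₁ - y₀), y₁ - ys⟫ := by
    rw [hu', inner_sub_left, ContinuousLinearMap.adjoint_inner_left, inner_add_left,
      real_inner_smul_left]
  have hzinner : ⟪v, z₁ - zs⟫ + ⟪h' z₀, z₁ - zs⟫ = ⟪l₁, C (z₁ - zs)⟫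
      - ⟪Q (z₁ - z₀), z₁ - zs⟫ := by
    rw [← inner_add_left, hv', inner_sub_left, ContinuousLinearMap.adjoint_inner_left]
  have hmult : ⟪l₁ + μ, B y₁ + C z₁ - b⟫ = ⟪l₁, B (y₁ - ys)⟫ + ⟪l₁, C (z₁ - zs)⟫
      + ⟪μ, B y₁ + C z₁ - b⟫ := by
    rw [inner_add_left, ← hres, inner_add_right]
  simp only [lagrangianGap]
  linarith

theorem lagrangianGap_le_ladmmEnergy_sub [CompleteSpace Y] [CompleteSpace Z] [CompleteSpace H]
    {h' : Z → Z} {L γ : ℝ} {P : Y →L[ℝ] Y} {Q : Z →L[ℝ] Z} (hγ : 0 < γ)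
    (hP : IsSelfAdjoint P) (hPpsd : ∀ v, 0 ≤ ⟪v, P v⟫)
    (hQ : IsSelfAdjoint Q) (hQpsd : ∀ v, L * ‖v‖ ^ 2 ≤ ⟪v, Q v⟫)
    (hh : ConvexOn ℝ Set.univ h) (hgrad : ∀ z, HasGradientAt h (h' z) z)
    (hlip : ∀ z z', ‖h' z - h' z'‖ ≤ L * ‖z - z'‖) (hfeas : B ys + C zs = b)
    {y₀ y₁ : Y} {z₀ z₁ : Z} {l₀ l₁ : H}
    (hstep : IsLinearizedADMMStep B C b f g h' γ P Q y₀ z₀ l₀ y₁ z₁ l₁) (μ : H) :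
    lagrangianGap B C b f g h ys zs μ (y₁, z₁) ≤
      ladmmEnergy C ys zs γ P Q y₀ z₀ (l₀ + μ) - ladmmEnergy C ys zs γ P Q y₁ z₁ (l₁ + μ) := by
  have hfirst := lagrangianGap_le_of_isLinearizedADMMStep hh hgrad hlip hfeas hstep μ
  set r := B y₁ + C z₁ - b
  have hmult : ‖l₀ + μ‖ ^ 2 / γ - ‖l₁ + μ‖ ^ 2 / γ = 2 * ⟪l₁ + μ, r⟫ + γ * ‖r‖ ^ 2 := by
    have hl : l₀ + μ = (l₁ + μ) + γ • r := by rw [hstep.2.2]; abel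
    rw [hl, norm_add_sq_real, norm_smul, real_inner_smul_right, Real.norm_of_nonneg hγ.le]
    field_simp
    ring
  have hB : B (y₁ - ys) = r - C (z₁ - zs) := by
    simp only [r, map_sub, ← hfeas]
    abel
  have hyoung : 2 * ⟪C (z₁ - z₀), r⟫ ≤ ‖C (z₁ - z₀)‖ ^ 2 + ‖r‖ ^ 2 := by
    linarith [norm_sub_sq_real (C (z₁ - z₀)) r, sq_nonneg ‖C (z₁ - z₀) - r‖]
  have hC : ‖C (z₀ - zs)‖ ^ 2
      = ‖C (z₁ - zs)‖ ^ 2 - 2 * ⟪C (z₁ - zs), C (z₁ - z₀)⟫ + ‖C (z₁ - z₀)‖ ^ 2 := by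
    rw [← norm_sub_sq_real, ← map_sub, sub_sub_sub_cancel_left]
  have hPid := hP.isSymmetric.two_mul_inner_sub_sub y₁ y₀ ys
  have hQid := hQ.isSymmetric.two_mul_inner_sub_sub z₁ z₀ zs
  simp only [ContinuousLinearMap.coe_coe] at hPid hQid
  have hPe := hPpsd (y₁ - y₀)
  have hQe := hQpsd (z₁ - z₀)
  rw [hB, inner_sub_right (C (z₁ - z₀)), real_inner_comm (C (z₁ - zs))] at hfirst
  simp only [ladmmEnergy]
  linarith [mul_le_mul_of_nonneg_left hyoung hγ.le, congrArg (γ * ·) hC]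

theorem ladmmEnergy_nonneg {γ : ℝ} {P : Y →L[ℝ] Y} {Q : Z →L[ℝ] Z} (hγ : 0 < γ)
    (hPpsd : ∀ v, 0 ≤ ⟪v, P v⟫) (hQpsd : ∀ v, 0 ≤ ⟪v, Q v⟫) (y : Y) (z : Z) (l : H) :
    0 ≤ ladmmEnergy C ys zs γ P Q y z l := by
  have := hPpsd (y - ys)
  have := hQpsd (z - zs)
  unfold ladmmEnergy
  positivity

theorem lagrangianGap_neg_nonneg [CompleteSpace Y] [CompleteSpace Z] [CompleteSpace H]
    {h' : Z → Z} {ls : H} (hh : ConvexOn ℝ Set.univ h) (hgrad : HasGradientAt h (h' zs) zs)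
    (hfeas : B ys + C zs = b)
    (hky : ∀ y' : Y, f y' ≥ f ys + ⟪B.adjoint ls, y' - ys⟫)
    (hkz : ∀ z' : Z, g z' ≥ g zs + ⟪C.adjoint ls - h' zs, z' - zs⟫) (p : Y × Z) :
    0 ≤ lagrangianGap B C b f g h ys zs (-ls) p := by
  have hfy := hky p.1
  have hgz := hkz p.2
  have hhz := hh.add_inner_le_of_hasGradientAt_s11 hgrad p.2
  rw [ContinuousLinearMap.adjoint_inner_left] at hfy
  rw [inner_sub_left, ContinuousLinearMap.adjoint_inner_left] at hgz
  have hres : B (p.1 - ys) + C (p.2 - zs) = B p.1 + C p.2 - b := by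
    rw [map_sub, map_sub, ← hfeas]
    abel
  simp only [lagrangianGap, inner_neg_left, ← hres, inner_add_right]
  linarith

end LinearizedADMM

theorem abs_le_and_norm_le_of_lagrangian_bound {H : Type*} [NormedAddCommGroup H]
    [InnerProductSpace ℝ H] {gap γ t D : ℝ} {R ls : H} (hγ : 0 < γ) (ht : 0 < t) (hls : ls ≠ 0)
    (hsaddle : ⟪ls, R⟫ ≤ gap) (hbound : ∀ μ : H, t * (gap + ⟪μ, R⟫) ≤ (‖μ‖ ^ 2 / γ + D) / 2) :
    |gap| ≤ 1 / (2 * t) * (4 * ‖ls‖ ^ 2 / γ + D) ∧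
      ‖R‖ ≤ 1 / (2 * t * ‖ls‖) * (4 * ‖ls‖ ^ 2 / γ + D) := by
  have hls_pos : 0 < ‖ls‖ := norm_pos_iff.mpr hls
  have hγls : 0 ≤ 4 * ‖ls‖ ^ 2 / γ := by positivity
  have hlower : -(‖ls‖ * ‖R‖) ≤ gap :=
    (neg_le_of_abs_le (abs_real_inner_le_norm ls R)).trans hsaddle
  have hlower_t : t * -(‖ls‖ * ‖R‖) ≤ t * gap := mul_le_mul_of_nonneg_left hlower ht.le
  have hupper : t * gap ≤ D / 2 := by simpa using hbound 0
  -- half of the `⟪μ, R⟫` term is eaten by `hlower`, the other half bounds `‖R‖`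
  obtain ⟨μ, hμ_norm, hμ_inner⟩ : ∃ μ : H, ‖μ‖ ^ 2 ≤ 4 * ‖ls‖ ^ 2 ∧ ⟪μ, R⟫ = 2 * ‖ls‖ * ‖R‖ := by
    rcases eq_or_ne R 0 with hR | hR
    · exact ⟨0, by rw [norm_zero, zero_pow two_ne_zero]; positivity, by simp [hR]⟩
    · have hR_pos : 0 < ‖R‖ := norm_pos_iff.mpr hR
      refine ⟨(2 * ‖ls‖ / ‖R‖) • R, le_of_eq ?_, ?_⟩
      · rw [norm_smul, Real.norm_of_nonneg (by positivity)]
        field_simp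
        norm_num
      · rw [real_inner_smul_left, real_inner_self_eq_norm_sq]
        field_simp
  have hresidual : t * (‖ls‖ * ‖R‖) ≤ (4 * ‖ls‖ ^ 2 / γ + D) / 2 := by
    have hμ := hbound μ
    have : ‖μ‖ ^ 2 / γ ≤ 4 * ‖ls‖ ^ 2 / γ := by gcongr
    rw [hμ_inner] at hμ
    linarith
  have hX : 1 / (2 * t) * (4 * ‖ls‖ ^ 2 / γ + D) = (4 * ‖ls‖ ^ 2 / γ + D) / 2 / t := by ring
  refine ⟨abs_le.mpr ⟨?_, ?_⟩, ?_⟩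
  · rw [hX, neg_le, le_div_iff₀ ht]
    linarith
  · rw [hX, le_div_iff₀ ht]
    linarith
  · rw [show 1 / (2 * t * ‖ls‖) * (4 * ‖ls‖ ^ 2 / γ + D)
        = (4 * ‖ls‖ ^ 2 / γ + D) / 2 / (t * ‖ls‖) by field_simp, le_div_iff₀ (by positivity)]
    linarith

/-- O(1/t) ergodic rate of the linearized ADMM with constant parameters. -/
theorem stmt_11 {Y Z H : Type*}
    [NormedAddCommGroup Y] [InnerProductSpace ℝ Y] [FiniteDimensional ℝ Y]
    [NormedAddCommGroup Z] [InnerProductSpace ℝ Z] [FiniteDimensional ℝ Z]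
    [NormedAddCommGroup H] [InnerProductSpace ℝ H] [FiniteDimensional ℝ H]
    (B : Y →L[ℝ] H) (C : Z →L[ℝ] H) (b : H)
    (f : Y → ℝ) (hf : ConvexOn ℝ Set.univ f)
    (g : Z → ℝ) (hg : ConvexOn ℝ Set.univ g)
    (h : Z → ℝ) (h' : Z → Z) (Lh : ℝ) (hLh : 0 ≤ Lh)
    (hh : ConvexOn ℝ Set.univ h)
    (hgrad : ∀ z : Z, HasGradientAt h (h' z) z)
    (hlip : ∀ z z' : Z, ‖h' z - h' z'‖ ≤ Lh * ‖z - z'‖)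
    (γ : ℝ) (hγ : 0 < γ)
    (P : Y →L[ℝ] Y) (hP : IsSelfAdjoint P) (hPpsd : ∀ v : Y, 0 ≤ ⟪v, P v⟫)
    (Q : Z →L[ℝ] Z) (hQ : IsSelfAdjoint Q) (hQpsd : ∀ v : Z, Lh * ‖v‖ ^ 2 ≤ ⟪v, Q v⟫)
    (y : ℕ → Y) (z : ℕ → Z) (lam : ℕ → H)
    (hlam1 : lam 1 = 0)
    (hopty : ∀ k : ℕ, 1 ≤ k → ∃ u : Y,
      (∀ y' : Y, f y' ≥ f (y (k+1)) + ⟪u, y' - y (k+1)⟫) ∧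
      u - (ContinuousLinearMap.adjoint B) (lam k)
        + γ • (ContinuousLinearMap.adjoint B) (B (y (k+1)) + C (z k) - b)
        + P (y (k+1) - y k) = 0)
    (hoptz : ∀ k : ℕ, 1 ≤ k → ∃ v : Z,
      (∀ z' : Z, g z' ≥ g (z (k+1)) + ⟪v, z' - z (k+1)⟫) ∧
      v + h' (z k) - (ContinuousLinearMap.adjoint C) (lam k)
        + γ • (ContinuousLinearMap.adjoint C) (B (y (k+1)) + C (z (k+1)) - b)
        + Q (z (k+1) - z k) = 0)
    (hlamup : ∀ k : ℕ, 1 ≤ k → lam (k+1) = lam k - γ • (B (y (k+1)) + C (z (k+1)) - b))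
    (ys : Y) (zs : Z) (ls : H)
    (hfeas : B ys + C zs = b) (hls : ls ≠ 0)
    (hky : ∀ y' : Y, f y' ≥ f ys + ⟪(ContinuousLinearMap.adjoint B) ls, y' - ys⟫)
    (hkz : ∀ z' : Z, g z' ≥ g zs + ⟪(ContinuousLinearMap.adjoint C) ls - h' zs, z' - zs⟫) :
    ∀ t : ℕ, 1 ≤ t → ∀ (yt : Y) (zt : Z),
      yt = (t : ℝ)⁻¹ • ∑ k ∈ Finset.Icc 1 t, y (k+1) →
      zt = (t : ℝ)⁻¹ • ∑ k ∈ Finset.Icc 1 t, z (k+1) →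
      |(f yt + g zt + h zt) - (f ys + g zs + h zs)|
          ≤ (1 / (2 * (t : ℝ))) * (4 * ‖ls‖ ^ 2 / γ + ⟪y 1 - ys, P (y 1 - ys)⟫
              + (⟪z 1 - zs, Q (z 1 - zs)⟫ + γ * ‖C (z 1 - zs)‖ ^ 2)) ∧
      ‖B yt + C zt - b‖
          ≤ (1 / (2 * (t : ℝ) * ‖ls‖)) * (4 * ‖ls‖ ^ 2 / γ + ⟪y 1 - ys, P (y 1 - ys)⟫
              + (⟪z 1 - zs, Q (z 1 - zs)⟫ + γ * ‖C (z 1 - zs)‖ ^ 2)) := by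
  intro t ht yt zt hyt hzt
  set V : H → ℕ → ℝ := fun μ k => ladmmEnergy C ys zs γ P Q (y k) (z k) (lam k + μ)
  have hQnonneg (v : Z) : 0 ≤ ⟪v, Q v⟫ := le_trans (by positivity) (hQpsd v)
  have hergodic (μ : H) : t * lagrangianGap B C b f g h ys zs μ (yt, zt) ≤ V μ 1 := by
    have havg : (yt, zt) = (t : ℝ)⁻¹ • ∑ k ∈ Icc 1 t, (y (k + 1), z (k + 1)) := by
      ext <;> simp [hyt, hzt, Prod.fst_sum, Prod.snd_sum]
    rw [havg]
    refine (convexOn_lagrangianGap hf hg hh μ).mul_map_average_le ht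
      (ladmmEnergy_nonneg hγ hPpsd hQnonneg _ _ _) fun k hk => ?_
    have hk : 1 ≤ k := (mem_Icc.mp hk).1
    exact lagrangianGap_le_ladmmEnergy_sub hγ hP hPpsd hQ hQpsd hh hgrad hlip hfeas
      ⟨hopty k hk, hoptz k hk, hlamup k hk⟩ μ
  have hsaddle := lagrangianGap_neg_nonneg hh (hgrad zs) hfeas hky hkz (yt, zt)
  simp only [lagrangianGap, inner_neg_left] at hsaddle
  have hbound := abs_le_and_norm_le_of_lagrangian_bound
    (gap := f yt + g zt + h zt - (f ys + g zs + h zs)) (R := B yt + C zt - b) (t := t)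
    (D := ⟪y 1 - ys, P (y 1 - ys)⟫ + (⟪z 1 - zs, Q (z 1 - zs)⟫ + γ * ‖C (z 1 - zs)‖ ^ 2))
    hγ (by exact_mod_cast ht) hls (by linarith) fun μ => by
      simpa only [V, ladmmEnergy, hlam1, zero_add, lagrangianGap, add_assoc] using hergodic μ
  simpa only [add_assoc] using hbound
end
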